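/- Let W_1, W_2, Y_1, Y_2, V_1, V_2 be jointly distributed random variables on finite sets such that: W_1, W_2 are independent with H(W_1) = H(W_2) = L'; H(Y_1, Y_2 | W_1, W_2) = 0; the Markov chain (V_1, V_2) ↔ (Y_1, Y_2) ↔ (W_1, W_2) holds; and (Y_1, Y_2, V_1, V_2) has the same joint distribution as (Y_1, Y_2, W_1, W_2). Then H(Y_1, Y_2) = 2·L' − H(V_1, V_2 | W_1, W_2). -/
import Mathlib


open scoped Classical
open Real

noncomputable section

/-- A probability mass function on a finite sample space. -/
structure FinProb (Ω : Type) [Fintype Ω] where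
  p : Ω → ℝ
  nonneg : ∀ ω, 0 ≤ p ω
  sum_one : ∑ ω, p ω = 1

namespace FinProb

variable {Ω : Type} [Fintype Ω]

/-- The probability of an event. -/
def prob (P : FinProb Ω) (E : Ω → Prop) : ℝ :=
  ∑ ω, if E ω then P.p ω else 0

/-- The Shannon entropy (in bits) of a random variable `Z` (with the usual
convention `0 · log 0 = 0`, automatic since `Real.logb 2 0 = 0`). -/
def entH {σ : Type} (P : FinProb Ω) (Z : Ω → σ) : ℝ :=
  ∑ z ∈ Finset.univ.image Z,
    -(P.prob fun ω => Z ω = z) * Real.logb 2 (P.prob fun ω => Z ω = z)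

/-- The conditional Shannon entropy (in bits) `H(Z | C)`. -/
def condH {σ τ : Type} (P : FinProb Ω) (Z : Ω → σ) (C : Ω → τ) : ℝ :=
  P.entH (fun ω => (Z ω, C ω)) - P.entH C

end FinProb

/-- The uniform distribution on a finite nonempty set. -/
def uniformProb (Ω : Type) [Fintype Ω] [Nonempty Ω] : FinProb Ω where
  p _ := (Fintype.card Ω : ℝ)⁻¹
  nonneg _ := by positivity
  sum_one := by
    rw [Finset.sum_const, Finset.card_univ, nsmul_eq_mul,
      mul_inv_cancel₀ (by exact_mod_cast Fintype.card_ne_zero)]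

section PureHelpers

def ent2 (x : ℝ) : ℝ := -x * Real.logb 2 x
@[simp] lemma ent2_zero : ent2 0 = 0 := by simp [ent2]

lemma sum_ent2_subsingleton {ι : Type*} [Fintype ι] (x : ι → ℝ)
    (h1 : ∀ i j, x i ≠ 0 → x j ≠ 0 → i = j) :
    ∑ i, ent2 (x i) = ent2 (∑ i, x i) := by
  by_cases h : ∀ i, x i = 0
  · simp [h]
  · push_neg at h
    obtain ⟨i0, hi0⟩ := h
    have hall : ∀ i, i ≠ i0 → x i = 0 := fun i hi => by
      by_contra hxi; exact hi (h1 i i0 hxi hi0)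
    rw [Finset.sum_eq_single i0 (fun b _ hb => by rw [hall b hb]; simp)
        (fun h => absurd (Finset.mem_univ i0) h),
      Finset.sum_eq_single i0 (fun b _ hb => hall b hb) (fun h => absurd (Finset.mem_univ i0) h)]

lemma det_of_entropy_eq {ι κ : Type*} [Fintype ι] [Fintype κ]
    (b : ι → κ → ℝ) (hb : ∀ i k, 0 ≤ b i k)
    (heq : ∑ k, ∑ i, ent2 (b i k) = ∑ k, ent2 (∑ i, b i k)) :
    ∀ i k, b i k = 0 ∨ b i k = ∑ j, b j k := by
  set S : κ → ℝ := fun k => ∑ j, b j k with hS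
  have hbS : ∀ i k, b i k ≤ S k := fun i k =>
    Finset.single_le_sum (fun j _ => hb j k) (Finset.mem_univ i)
  have hterm : ∀ i k, 0 ≤ b i k * (Real.logb 2 (S k) - Real.logb 2 (b i k)) := by
    intro i k
    rcases eq_or_lt_of_le (hb i k) with h0 | h0
    · rw [← h0]; simp
    · have := Real.logb_le_logb_of_le (one_lt_two) h0 (hbS i k)
      have h2 : 0 ≤ Real.logb 2 (S k) - Real.logb 2 (b i k) := by linarith
      positivity
  have hg : ∀ k, ∑ i, ent2 (b i k) - ent2 (S k)
      = ∑ i, b i k * (Real.logb 2 (S k) - Real.logb 2 (b i k)) := by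
    intro k
    have h1 : ent2 (S k) = ∑ i, (-(b i k) * Real.logb 2 (S k)) := by
      rw [ent2, ← Finset.sum_mul, ← Finset.sum_neg_distrib]
    rw [h1, ← Finset.sum_sub_distrib]
    refine Finset.sum_congr rfl fun i _ => ?_
    rw [ent2]; ring
  have hsum0 : ∑ k, ∑ i, b i k * (Real.logb 2 (S k) - Real.logb 2 (b i k)) = 0 := by
    have h2 : ∑ k, (∑ i, ent2 (b i k) - ent2 (S k)) = 0 := by
      rw [Finset.sum_sub_distrib, heq]; ring
    rw [← h2]
    exact Finset.sum_congr rfl fun k _ => (hg k).symm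
  have hallzero : ∀ k i, b i k * (Real.logb 2 (S k) - Real.logb 2 (b i k)) = 0 := by
    have h1 := (Finset.sum_eq_zero_iff_of_nonneg
      (fun k _ => Finset.sum_nonneg fun i _ => hterm i k)).1 hsum0
    intro k i
    exact (Finset.sum_eq_zero_iff_of_nonneg (fun i _ => hterm i k)).1
      (h1 k (Finset.mem_univ k)) i (Finset.mem_univ i)
  intro i k
  rcases eq_or_lt_of_le (hb i k) with h0 | h0
  · exact Or.inl h0.symm
  · right
    rcases eq_or_lt_of_le (hbS i k) with h1 | h1
    · exact h1
    · exfalso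
      have hlt := Real.logb_lt_logb (one_lt_two) h0 h1
      rcases mul_eq_zero.1 (hallzero k i) with h | h
      · exact absurd h (ne_of_gt h0)
      · linarith

lemma indep_entropy {A B : Type*} [Fintype A] [Fintype B] (p : A → ℝ) (q : B → ℝ) :
    ∑ a, ∑ b, ent2 (p a * q b)
      = (∑ b, q b) * ∑ a, ent2 (p a) + (∑ a, p a) * ∑ b, ent2 (q b) := by
  have key : ∀ a b, ent2 (p a * q b)
      = q b * ent2 (p a) + p a * ent2 (q b) := by
    intro a b
    by_cases hp : p a = 0
    · simp [hp, ent2]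
    by_cases hq : q b = 0
    · simp [hq, ent2]
    rw [ent2, Real.logb_mul hp hq, ent2, ent2]; ring
  calc ∑ a, ∑ b, ent2 (p a * q b)
      = ∑ a, ∑ b, (q b * ent2 (p a) + p a * ent2 (q b)) :=
        Finset.sum_congr rfl fun a _ => Finset.sum_congr rfl fun b _ => key a b
    _ = ∑ a, ((∑ b, q b) * ent2 (p a) + p a * ∑ b, ent2 (q b)) := by
        refine Finset.sum_congr rfl fun a _ => ?_
        rw [Finset.sum_add_distrib, ← Finset.sum_mul, ← Finset.mul_sum]
    _ = (∑ b, q b) * ∑ a, ent2 (p a) + (∑ a, p a) * ∑ b, ent2 (q b) := by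
        rw [Finset.sum_add_distrib, ← Finset.mul_sum, ← Finset.sum_mul]

lemma markov_entropy_slice {A C : Type*} [Fintype A] [Fintype C]
    (q : A → C → ℝ) (a : A → ℝ) (bb : C → ℝ) (c : ℝ)
    (hq : ∀ v w, 0 ≤ q v w)
    (ha : ∀ v, a v = ∑ w, q v w) (hbb : ∀ w, bb w = ∑ v, q v w)
    (hc : c = ∑ v, a v)
    (hmk : ∀ v w, q v w * c = a v * bb w) :
    ∑ v, ∑ w, ent2 (q v w) = ∑ v, ent2 (a v) + ∑ w, ent2 (bb w) - ent2 c := by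
  have ha_nonneg : ∀ v, 0 ≤ a v := fun v => (ha v) ▸ Finset.sum_nonneg fun w _ => hq v w
  have hqa : ∀ v w, q v w ≤ a v := fun v w =>
    (ha v) ▸ Finset.single_le_sum (fun w _ => hq v w) (Finset.mem_univ w)
  have hqb : ∀ v w, q v w ≤ bb w := fun v w =>
    (hbb w) ▸ Finset.single_le_sum (fun v _ => hq v w) (Finset.mem_univ v)
  rcases eq_or_lt_of_le (Finset.sum_nonneg fun v _ => ha_nonneg v : (0:ℝ) ≤ ∑ v, a v) with h0 | h0
  · have haz : ∀ v, a v = 0 := fun v =>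
      (Finset.sum_eq_zero_iff_of_nonneg (fun v _ => ha_nonneg v)).1 h0.symm v (Finset.mem_univ v)
    have hqz : ∀ v w, q v w = 0 := fun v w =>
      le_antisymm ((hqa v w).trans (le_of_eq (haz v))) (hq v w)
    have hbz : ∀ w, bb w = 0 := fun w => by
      rw [hbb]; exact Finset.sum_eq_zero fun v _ => hqz v w
    have hc0 : c = 0 := by rw [hc, ← h0]
    simp only [hqz, haz, hbz, ent2_zero, Finset.sum_const_zero, hc0]
    norm_num
  · have hcpos : 0 < c := hc ▸ h0
    have key : ∀ v w, ent2 (q v w)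
        = -(q v w) * Real.logb 2 (a v) + -(q v w) * Real.logb 2 (bb w)
          + q v w * Real.logb 2 c := by
      intro v w
      rcases eq_or_lt_of_le (hq v w) with hq0 | hq0
      · rw [← hq0]; simp
      · have hav : 0 < a v := lt_of_lt_of_le hq0 (hqa v w)
        have hbw : 0 < bb w := lt_of_lt_of_le hq0 (hqb v w)
        have hqeq : q v w = a v * bb w / c := by
          rw [eq_div_iff (ne_of_gt hcpos)]; exact hmk v w
        rw [ent2, hqeq, Real.logb_div (by positivity) (ne_of_gt hcpos),
          Real.logb_mul (ne_of_gt hav) (ne_of_gt hbw), ← hqeq]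
        ring
    calc ∑ v, ∑ w, ent2 (q v w)
        = ∑ v, ∑ w, (-(q v w) * Real.logb 2 (a v) + -(q v w) * Real.logb 2 (bb w)
            + q v w * Real.logb 2 c) :=
          Finset.sum_congr rfl fun v _ => Finset.sum_congr rfl fun w _ => key v w
      _ = ∑ v, ent2 (a v) + ∑ w, ent2 (bb w) - ent2 c := by
          simp only [Finset.sum_add_distrib]
          have e1 : ∑ v, ∑ w, (-(q v w) * Real.logb 2 (a v)) = ∑ v, ent2 (a v) := by
            refine Finset.sum_congr rfl fun v _ => ?_
            rw [← Finset.sum_mul, Finset.sum_neg_distrib, ← ha, ent2]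
          have e2 : ∑ v, ∑ w, (-(q v w) * Real.logb 2 (bb w)) = ∑ w, ent2 (bb w) := by
            rw [Finset.sum_comm]
            refine Finset.sum_congr rfl fun w _ => ?_
            rw [← Finset.sum_mul, Finset.sum_neg_distrib, ← hbb, ent2]
          have e3 : ∑ v, ∑ w, (q v w * Real.logb 2 c) = c * Real.logb 2 c := by
            simp only [← Finset.sum_mul]
            congr 1
            rw [hc]
            exact (Finset.sum_congr rfl fun v _ => (ha v)).symm
          rw [e1, e2, e3, ent2]
          ring

/-- Master combinatorial identity. -/
lemma master {A C : Type*} [Fintype A] [Fintype C]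
    (q : A → C → A → ℝ) (hq : ∀ v y w, 0 ≤ q v y w)
    (hdet : ∑ w : A, ∑ y : C, ent2 (∑ v, q v y w) = ∑ w, ent2 (∑ y, ∑ v, q v y w))
    (hmk : ∀ v y w, q v y w * (∑ v', ∑ w', q v' y w')
      = (∑ w', q v y w') * (∑ v', q v' y w))
    (hmirror : ∀ v y, (∑ w, q v y w) = (∑ v', q v' y v)) :
    ∑ v, ∑ w, ent2 (∑ y, q v y w)
      = 2 * (∑ y, ∑ w, ent2 (∑ v, q v y w)) - ∑ y, ent2 (∑ v, ∑ w, q v y w) := by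
  classical
  -- determinism of the (y,w) marginal
  have hb : ∀ y w, (0:ℝ) ≤ ∑ v, q v y w := fun y w => Finset.sum_nonneg fun v _ => hq v y w
  have det := det_of_entropy_eq (fun y w => ∑ v, q v y w) hb hdet
  -- at most one y with q v y w ≠ 0, for fixed (v,w)
  have collapse : ∀ v w, ∑ y, ent2 (q v y w) = ent2 (∑ y, q v y w) := by
    intro v w
    refine sum_ent2_subsingleton _ fun y y' h h' => ?_
    by_contra hne
    have hq1 : 0 < q v y w := lt_of_le_of_ne (hq v y w) (Ne.symm h)
    have hq2 : 0 < q v y' w := lt_of_le_of_ne (hq v y' w) (Ne.symm h')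
    have hb1 : 0 < ∑ v', q v' y w :=
      lt_of_lt_of_le hq1 (Finset.single_le_sum (fun v' _ => hq v' y w) (Finset.mem_univ v))
    have hb2 : 0 < ∑ v', q v' y' w :=
      lt_of_lt_of_le hq2 (Finset.single_le_sum (fun v' _ => hq v' y' w) (Finset.mem_univ v))
    have hS1 : (∑ v', q v' y w) = ∑ y'', ∑ v', q v' y'' w :=
      (det y w).resolve_left (ne_of_gt hb1)
    have hS2 : (∑ v', q v' y' w) = ∑ y'', ∑ v', q v' y'' w :=
      (det y' w).resolve_left (ne_of_gt hb2)
    have hpair : (∑ v', q v' y w) + (∑ v', q v' y' w) ≤ ∑ y'', ∑ v', q v' y'' w := by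
      have h2 := Finset.sum_le_sum_of_subset_of_nonneg
        (f := fun y'' => ∑ v', q v' y'' w)
        (Finset.subset_univ ({y, y'} : Finset C)) (fun y'' _ _ => hb y'' w)
      rwa [Finset.sum_pair hne] at h2
    rw [hS1, hS2] at hpair
    have : (0:ℝ) < ∑ y'', ∑ v', q v' y'' w := hS1 ▸ hb1
    linarith
  -- collapse the triple entropy
  have step1 : ∑ v, ∑ w, ent2 (∑ y, q v y w) = ∑ y, ∑ v, ∑ w, ent2 (q v y w) := by
    rw [Finset.sum_comm (f := fun y v => ∑ w, ent2 (q v y w))]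
    refine Finset.sum_congr rfl fun v _ => ?_
    rw [Finset.sum_comm (f := fun y w => ent2 (q v y w))]
    exact Finset.sum_congr rfl fun w _ => (collapse v w).symm
  -- chain rule via Markov
  have step2 : ∑ y, ∑ v, ∑ w, ent2 (q v y w)
      = (∑ y, ∑ v, ent2 (∑ w, q v y w)) + (∑ y, ∑ w, ent2 (∑ v, q v y w))
        - ∑ y, ent2 (∑ v, ∑ w, q v y w) := by
    rw [← Finset.sum_add_distrib, ← Finset.sum_sub_distrib]
    refine Finset.sum_congr rfl fun y _ => ?_
    exact markov_entropy_slice (fun v w => q v y w) (fun v => ∑ w, q v y w)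
      (fun w => ∑ v, q v y w) (∑ v, ∑ w, q v y w)
      (fun v w => hq v y w) (fun v => rfl) (fun w => rfl) rfl (fun v w => hmk v y w)
  -- mirror: H(V,Y) = H(Y,W)
  have step3 : ∑ y, ∑ v, ent2 (∑ w, q v y w) = ∑ y, ∑ w, ent2 (∑ v, q v y w) := by
    refine Finset.sum_congr rfl fun y _ => Finset.sum_congr rfl fun v _ => ?_
    rw [hmirror v y]
  rw [step1, step2, step3]; ring

end PureHelpers

namespace FinProb

variable {Ω : Type} [Fintype Ω] (P : FinProb Ω)

lemma prob_nonneg (E : Ω → Prop) : 0 ≤ P.prob E :=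
  Finset.sum_nonneg fun ω _ => by
    split_ifs
    · exact P.nonneg ω
    · exact le_refl 0

lemma prob_congr {E F : Ω → Prop} (h : ∀ ω, E ω ↔ F ω) : P.prob E = P.prob F := by
  unfold prob
  exact Finset.sum_congr rfl fun ω _ => by simp [h ω]

lemma entH_eq_sum_univ {σ : Type} [Fintype σ] (Z : Ω → σ) :
    P.entH Z = ∑ z : σ, ent2 (P.prob fun ω => Z ω = z) := by
  unfold entH
  rw [← Finset.sum_subset (Finset.subset_univ (Finset.univ.image Z))]
  · exact Finset.sum_congr rfl fun z _ => rfl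
  · intro z _ hz
    have h0 : (P.prob fun ω => Z ω = z) = 0 := by
      unfold prob
      refine Finset.sum_eq_zero fun ω _ => ?_
      rw [if_neg]
      intro h
      exact hz (Finset.mem_image.2 ⟨ω, Finset.mem_univ ω, h⟩)
    simp [h0, ent2]

lemma prob_total {σ : Type} [Fintype σ] (E : Ω → Prop) (Z : Ω → σ) :
    P.prob E = ∑ z : σ, P.prob (fun ω => E ω ∧ Z ω = z) := by
  unfold prob
  rw [Finset.sum_comm]
  refine Finset.sum_congr rfl fun ω _ => ?_
  by_cases hE : E ω
  · simp only [hE, true_and]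
    rw [Finset.sum_ite_eq Finset.univ (Z ω) (fun _ => P.p ω)]
    simp
  · simp [hE]

lemma sum_prob_eq_one {σ : Type} [Fintype σ] (Z : Ω → σ) :
    ∑ z : σ, P.prob (fun ω => Z ω = z) = 1 := by
  have h := P.prob_total (fun _ => True) Z
  simp only [true_and] at h
  rw [← h]
  unfold prob
  simp [P.sum_one]

end FinProb

/-- The pseudo-message identity for the database-2 side: if (V₁,V₂) is Markov-coupled to
(W₁,W₂) through (Y₁,Y₂), with (Y₁,Y₂,V₁,V₂) distributed identically to (Y₁,Y₂,W₁,W₂),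
then H(Y₁,Y₂) = 2L' − H(V₁,V₂ | W₁,W₂). -/
theorem pseudo_message_identity_Y
    {Ω A1 A2 C1 C2 : Type} [Fintype Ω]
    [Fintype A1] [Fintype A2] [Fintype C1] [Fintype C2]
    (P : FinProb Ω)
    (W1 V1 : Ω → A1) (W2 V2 : Ω → A2) (Y1 : Ω → C1) (Y2 : Ω → C2) (L' : ℝ)
    (hHW1 : P.entH W1 = L') (hHW2 : P.entH W2 = L')
    (hindep : ∀ (a : A1) (b : A2),
      P.prob (fun ω => W1 ω = a ∧ W2 ω = b) =
        P.prob (fun ω => W1 ω = a) * P.prob (fun ω => W2 ω = b))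
    (hdet : P.condH (fun ω => (Y1 ω, Y2 ω)) (fun ω => (W1 ω, W2 ω)) = 0)
    (hmarkov : ∀ (v : A1 × A2) (y : C1 × C2) (w : A1 × A2),
      P.prob (fun ω => (V1 ω, V2 ω) = v ∧ (Y1 ω, Y2 ω) = y ∧ (W1 ω, W2 ω) = w) *
          P.prob (fun ω => (Y1 ω, Y2 ω) = y)
        = P.prob (fun ω => (V1 ω, V2 ω) = v ∧ (Y1 ω, Y2 ω) = y) *
          P.prob (fun ω => (Y1 ω, Y2 ω) = y ∧ (W1 ω, W2 ω) = w))
    (hmirror : ∀ (y : C1 × C2) (v : A1 × A2),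
      P.prob (fun ω => (Y1 ω, Y2 ω) = y ∧ (V1 ω, V2 ω) = v)
        = P.prob (fun ω => (Y1 ω, Y2 ω) = y ∧ (W1 ω, W2 ω) = v)) :
    P.entH (fun ω => (Y1 ω, Y2 ω))
      = 2 * L' - P.condH (fun ω => (V1 ω, V2 ω)) (fun ω => (W1 ω, W2 ω)) := by
    classical
  set q : A1 × A2 → C1 × C2 → A1 × A2 → ℝ := fun v y w =>
    P.prob fun ω => (V1 ω, V2 ω) = v ∧ (Y1 ω, Y2 ω) = y ∧ (W1 ω, W2 ω) = w with hq_def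
  have hq0 : ∀ v y w, 0 ≤ q v y w := fun v y w => P.prob_nonneg _
  -- marginal identities
  have hb : ∀ y w, (∑ v, q v y w)
      = P.prob (fun ω => (Y1 ω, Y2 ω) = y ∧ (W1 ω, W2 ω) = w) := by
    intro y w
    rw [P.prob_total (fun ω => (Y1 ω, Y2 ω) = y ∧ (W1 ω, W2 ω) = w) (fun ω => (V1 ω, V2 ω))]
    refine Finset.sum_congr rfl fun v _ => ?_
    simp only [hq_def]
    exact P.prob_congr fun ω => by tauto
  have ha : ∀ v y, (∑ w, q v y w)
      = P.prob (fun ω => (V1 ω, V2 ω) = v ∧ (Y1 ω, Y2 ω) = y) := by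
    intro v y
    rw [P.prob_total (fun ω => (V1 ω, V2 ω) = v ∧ (Y1 ω, Y2 ω) = y) (fun ω => (W1 ω, W2 ω))]
    refine Finset.sum_congr rfl fun w _ => ?_
    simp only [hq_def]
    exact P.prob_congr fun ω => by tauto
  have hcy : ∀ y, (∑ v, ∑ w, q v y w) = P.prob (fun ω => (Y1 ω, Y2 ω) = y) := by
    intro y
    rw [P.prob_total (fun ω => (Y1 ω, Y2 ω) = y) (fun ω => (V1 ω, V2 ω))]
    refine Finset.sum_congr rfl fun v _ => ?_
    rw [ha v y]
    exact P.prob_congr fun ω => by tauto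
  have hvw : ∀ v w, (∑ y, q v y w)
      = P.prob (fun ω => (V1 ω, V2 ω) = v ∧ (W1 ω, W2 ω) = w) := by
    intro v w
    rw [P.prob_total (fun ω => (V1 ω, V2 ω) = v ∧ (W1 ω, W2 ω) = w) (fun ω => (Y1 ω, Y2 ω))]
    refine Finset.sum_congr rfl fun y _ => ?_
    simp only [hq_def]
    exact P.prob_congr fun ω => by tauto
  have hWmarg : ∀ w, (∑ y, ∑ v, q v y w) = P.prob (fun ω => (W1 ω, W2 ω) = w) := by
    intro w
    rw [P.prob_total (fun ω => (W1 ω, W2 ω) = w) (fun ω => (Y1 ω, Y2 ω))]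
    refine Finset.sum_congr rfl fun y _ => ?_
    rw [hb y w]
    exact P.prob_congr fun ω => by tauto
  -- entropy translations
  have eY : P.entH (fun ω => (Y1 ω, Y2 ω)) = ∑ y, ent2 (∑ v, ∑ w, q v y w) := by
    rw [P.entH_eq_sum_univ]
    exact Finset.sum_congr rfl fun y _ => by rw [hcy y]
  have eW : P.entH (fun ω => (W1 ω, W2 ω)) = ∑ w, ent2 (∑ y, ∑ v, q v y w) := by
    rw [P.entH_eq_sum_univ]
    exact Finset.sum_congr rfl fun w _ => by rw [hWmarg w]
  have eYW : P.entH (fun ω => ((Y1 ω, Y2 ω), (W1 ω, W2 ω)))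
      = ∑ y, ∑ w, ent2 (∑ v, q v y w) := by
    rw [P.entH_eq_sum_univ, Fintype.sum_prod_type]
    refine Finset.sum_congr rfl fun y _ => Finset.sum_congr rfl fun w _ => ?_
    rw [hb y w]
    congr 1
    exact P.prob_congr fun ω => by simp [Prod.ext_iff]
  have eVW : P.entH (fun ω => ((V1 ω, V2 ω), (W1 ω, W2 ω)))
      = ∑ v, ∑ w, ent2 (∑ y, q v y w) := by
    rw [P.entH_eq_sum_univ, Fintype.sum_prod_type]
    refine Finset.sum_congr rfl fun v _ => Finset.sum_congr rfl fun w _ => ?_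
    rw [hvw v w]
    congr 1
    exact P.prob_congr fun ω => by simp [Prod.ext_iff]
  -- H(W1,W2) = 2 L' by independence
  have eW2 : P.entH (fun ω => (W1 ω, W2 ω)) = 2 * L' := by
    rw [P.entH_eq_sum_univ, Fintype.sum_prod_type]
    have hsplit : ∀ a b, (P.prob fun ω => (W1 ω, W2 ω) = (a, b))
        = (P.prob fun ω => W1 ω = a) * (P.prob fun ω => W2 ω = b) := by
      intro a b
      rw [← hindep a b]
      exact P.prob_congr fun ω => by simp [Prod.ext_iff]
    calc ∑ a, ∑ b, ent2 (P.prob fun ω => (W1 ω, W2 ω) = (a, b))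
        = ∑ a, ∑ b, ent2 ((P.prob fun ω => W1 ω = a) * (P.prob fun ω => W2 ω = b)) :=
          Finset.sum_congr rfl fun a _ => Finset.sum_congr rfl fun b _ => by rw [hsplit a b]
      _ = (∑ b, P.prob fun ω => W2 ω = b) * (∑ a, ent2 (P.prob fun ω => W1 ω = a))
            + (∑ a, P.prob fun ω => W1 ω = a) * (∑ b, ent2 (P.prob fun ω => W2 ω = b)) :=
          indep_entropy _ _
      _ = 2 * L' := by
          rw [P.sum_prob_eq_one W1, P.sum_prob_eq_one W2, one_mul, one_mul,
            ← P.entH_eq_sum_univ W1, ← P.entH_eq_sum_univ W2, hHW1, hHW2]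
          ring
  -- H(Y,W) = H(W) = 2L' from determinism
  have hYWval : ∑ y, ∑ w, ent2 (∑ v, q v y w) = 2 * L' := by
    have h := sub_eq_zero.mp hdet
    rw [eYW, eW2] at h
    exact h
  -- hypotheses of the master lemma
  have hdet' : ∑ w : A1 × A2, ∑ y : C1 × C2, ent2 (∑ v, q v y w)
      = ∑ w, ent2 (∑ y, ∑ v, q v y w) := by
    rw [Finset.sum_comm]
    rw [← eYW, ← eW, sub_eq_zero.mp hdet]
  have hmk' : ∀ v y w, q v y w * (∑ v', ∑ w', q v' y w')
      = (∑ w', q v y w') * (∑ v', q v' y w) := by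
    intro v y w
    rw [hcy y, ha v y, hb y w]
    simp only [hq_def]
    exact hmarkov v y w
  have hmir' : ∀ v y, (∑ w, q v y w) = (∑ v', q v' y v) := by
    intro v y
    rw [ha v y, hb y v, ← hmirror y v]
    exact P.prob_congr fun ω => by tauto
  have hM := master q hq0 hdet' hmk' hmir'
  -- assemble
  show P.entH (fun ω => (Y1 ω, Y2 ω)) = 2 * L' -
    (P.entH (fun ω => ((V1 ω, V2 ω), (W1 ω, W2 ω))) - P.entH (fun ω => (W1 ω, W2 ω)))
  rw [eY, eVW, eW2, hM, hYWval]
  ring
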